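/- arXiv:2210.05973 — 2 statements merged into one kernel-verified Lean document; each statement's English description precedes it below -/
import Mathlib

section
/- Let v : ℝ³ → ℝ² be smooth and 1-periodic in the horizontal variables, and suppose that ∫_{−h}^0 div_H v(x_H,ζ) dζ = 0 for every x_H. Define the barotropic mode v̄(x_H) = (1/h)∫_{−h}^0 v(x_H,ζ) dζ, the baroclinic mode ṽ = v − v̄, and w(v)(x_H,x₃) = −∫_{−h}^{x₃} div_H v(x_H,ζ) dζ. Then for every x_H, (1/h) ∫_{−h}^0 [ (v·∇_H)v + w(v) ∂₃v ](x_H,ζ) dζ = [(v̄·∇_H)v̄](x_H) + (1/h) ∫_{−h}^0 [ (ṽ·∇_H)ṽ + (div_H ṽ) ṽ ](x_H,ζ) dζ (an identity of ℝ²-valued functions on 𝕋²). -/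
open MeasureTheory Real

noncomputable section

/-- Partial derivative of `f` in the `j`-th coordinate direction. -/
def pd (j : Fin 3) (f : (Fin 3 → ℝ) → ℝ) (x : Fin 3 → ℝ) : ℝ :=
  fderiv ℝ f x (Pi.single j 1)

/-- `f` is 1-periodic in the two horizontal variables. -/
def HorizPeriodic (f : (Fin 3 → ℝ) → ℝ) : Prop :=
  ∀ x : Fin 3 → ℝ, f (x + Pi.single 0 1) = f x ∧ f (x + Pi.single 1 1) = f x

/-- The fundamental domain `[0,1] × [0,1] × [-h,0]` of `𝒪 = 𝕋² × (-h,0)`. -/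
def Box (h : ℝ) : Set (Fin 3 → ℝ) := Set.Icc ![0, 0, -h] ![1, 1, 0]

/-- Horizontal divergence `div_H v = ∂₁ v¹ + ∂₂ v²`. -/
def divH (v : Fin 2 → (Fin 3 → ℝ) → ℝ) (x : Fin 3 → ℝ) : ℝ :=
  pd 0 (v 0) x + pd 1 (v 1) x

/-- Horizontal advection `(v · ∇_H) g = v¹ ∂₁ g + v² ∂₂ g`. -/
def advH (v : Fin 2 → (Fin 3 → ℝ) → ℝ) (g : (Fin 3 → ℝ) → ℝ) (x : Fin 3 → ℝ) : ℝ :=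
  v 0 x * pd 0 g x + v 1 x * pd 1 g x

/-- Advection `(u · ∇) g` by the full velocity field `u = (v, w)`. -/
def adv3 (v : Fin 2 → (Fin 3 → ℝ) → ℝ) (w g : (Fin 3 → ℝ) → ℝ) (x : Fin 3 → ℝ) : ℝ :=
  v 0 x * pd 0 g x + v 1 x * pd 1 g x + w x * pd 2 g x

/-- Vertical velocity `w(v)(x) = -∫_{-h}^{x₃} div_H v (x_H, ζ) dζ`. -/
def wv (h : ℝ) (v : Fin 2 → (Fin 3 → ℝ) → ℝ) (x : Fin 3 → ℝ) : ℝ :=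
  -(∫ ζ in (-h)..(x 2), divH v (Function.update x 2 ζ))

/-- Vertical primitive `Θ(x) = ∫_{-h}^{x₃} θ(x_H, ζ) dζ`. -/
def vint (h : ℝ) (θ : (Fin 3 → ℝ) → ℝ) (x : Fin 3 → ℝ) : ℝ :=
  ∫ ζ in (-h)..(x 2), θ (Function.update x 2 ζ)


/-!
Fix `x_H` and read every field along the segment `ζ ↦ (x_H, ζ)`, `ζ ∈ [-h, 0]`. There
`∂₃ w(v) = -div_H v`, and `w(v)` vanishes at both ends (at `ζ = 0` because `div_H v` has zero
vertical mean), so integrating by parts turns `w(v) ∂₃ v_k` into `(div_H v) v_k`. Horizontal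
derivatives commute with the vertical mean, so `v`, `∂ⱼ v_k` and `div_H v` have means `v̄`,
`∂ⱼ v̄_k` and `0`, and fluctuations `ṽ`, `∂ⱼ ṽ_k` and `div_H ṽ`. Applying
`mean (f g) = mean f · mean g + mean ((f - mean f) (g - mean g))` to the three products in
`(v·∇_H) v_k + (div_H v) v_k` gives the splitting.
-/

open Function

section UpdateCoord

variable {ι E : Type*} [DecidableEq ι] [NormedAddCommGroup E] [NormedSpace ℝ E]

def eraseCoord (i : ι) : (ι → ℝ) →L[ℝ] ι → ℝ :=
  ContinuousLinearMap.id ℝ (ι → ℝ) -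
    (ContinuousLinearMap.single ℝ (fun _ : ι => ℝ) i).comp (ContinuousLinearMap.proj i)

theorem update_eq_eraseCoord_add (y : ι → ℝ) (i : ι) (ζ : ℝ) :
    update y i ζ = eraseCoord i y + Pi.single i ζ := by
  ext j
  rcases eq_or_ne j i with rfl | hj <;> simp [eraseCoord, *]

theorem eraseCoord_single_of_ne {i j : ι} (hji : j ≠ i) :
    eraseCoord i (Pi.single j 1) = Pi.single j 1 := by
  simp [eraseCoord, hji]

theorem Continuous.comp_update {X : Type*} [TopologicalSpace X] {f : (ι → ℝ) → X}
    (hf : Continuous f) (x : ι → ℝ) (i : ι) :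
    Continuous fun ζ : ℝ => f (Function.update x i ζ) :=
  hf.comp (continuous_const.update i continuous_id')

variable [Fintype ι]

theorem hasFDerivAt_update_base (i : ι) (ζ : ℝ) (y : ι → ℝ) :
    HasFDerivAt (fun y => update y i ζ) (eraseCoord i) y := by
  simp_rw [update_eq_eraseCoord_add]
  exact (eraseCoord i).hasFDerivAt.add_const _

theorem hasDerivAt_comp_update {g : (ι → ℝ) → E} (hg : Differentiable ℝ g) (i : ι)
    (y : ι → ℝ) (t : ℝ) :
    HasDerivAt (fun ζ => g (update y i ζ)) (fderiv ℝ g (update y i t) (Pi.single i 1)) t :=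
  (hg _).hasFDerivAt.comp_hasDerivAt t (hasDerivAt_update y i t)

theorem hasFDerivAt_intervalIntegral_comp_update {g : (ι → ℝ) → E} (hg : ContDiff ℝ 1 g)
    (i : ι) (a b : ℝ) (x : ι → ℝ) :
    HasFDerivAt (fun y => ∫ ζ in a..b, g (update y i ζ))
      (∫ ζ in a..b, (fderiv ℝ g (update x i ζ)).comp (eraseCoord i)) x := by
  have hg' : Continuous (fderiv ℝ g) := hg.continuous_fderiv one_ne_zero
  have hslice (y : ι → ℝ) : Continuous (update y i) := continuous_const.update i continuous_id'
  obtain ⟨C, hC⟩ : ∃ C, ∀ p ∈ Metric.closedBall x 1 ×ˢ Set.uIcc a b,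
      ‖fderiv ℝ g (update p.1 i p.2)‖ ≤ C :=
    ((isCompact_closedBall x 1).prod isCompact_uIcc).exists_bound_of_continuousOn
      (hg'.comp (continuous_update i)).continuousOn
  have hcomp : Continuous fun L : (ι → ℝ) →L[ℝ] E => L.comp (eraseCoord i) :=
    ((ContinuousLinearMap.compL ℝ _ _ E).flip (eraseCoord i)).continuous
  refine intervalIntegral.hasFDerivAt_integral_of_dominated_of_fderiv_le
    (bound := fun _ => C * ‖eraseCoord i‖) (Metric.ball_mem_nhds x one_pos)
    (.of_forall fun y => (hg.continuous.comp (hslice y)).aestronglyMeasurable)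
    ((hg.continuous.comp (hslice x)).intervalIntegrable _ _)
    (hcomp.comp (hg'.comp (hslice x))).aestronglyMeasurable
    (.of_forall fun ζ hζ y hy => ?_) intervalIntegrable_const
    (.of_forall fun ζ _ y _ =>
      (hg.differentiable one_ne_zero _).hasFDerivAt.comp y (hasFDerivAt_update_base i ζ y))
  refine (ContinuousLinearMap.opNorm_comp_le _ _).trans
    (mul_le_mul_of_nonneg_right (hC (y, ζ) ?_) (norm_nonneg _))
  exact ⟨Metric.ball_subset_closedBall hy, Set.uIoc_subset_uIcc hζ⟩

theorem fderiv_intervalIntegral_comp_update_single {g : (ι → ℝ) → E} (hg : ContDiff ℝ 1 g)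
    {i j : ι} (hji : j ≠ i) (a b : ℝ) (x : ι → ℝ) :
    fderiv ℝ (fun y => ∫ ζ in a..b, g (update y i ζ)) x (Pi.single j 1)
      = ∫ ζ in a..b, fderiv ℝ g (update x i ζ) (Pi.single j 1) := by
  have hg' : Continuous (fderiv ℝ g) := hg.continuous_fderiv one_ne_zero
  have hint : IntervalIntegrable (fun ζ => (fderiv ℝ g (update x i ζ)).comp (eraseCoord i))
      volume a b :=
    Continuous.intervalIntegrable (by fun_prop) a b
  rw [(hasFDerivAt_intervalIntegral_comp_update hg i a b x).fderiv,
    ContinuousLinearMap.intervalIntegral_apply hint]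
  simp [eraseCoord_single_of_ne hji]

end UpdateCoord

theorem intervalIntegral_mul_eq_add_integral_sub_mul_sub {f g : ℝ → ℝ} {a b c d : ℝ}
    (hf : Continuous f) (hg : Continuous g) (hfc : ∫ t in a..b, f t = (b - a) * c)
    (hgd : ∫ t in a..b, g t = (b - a) * d) :
    ∫ t in a..b, f t * g t = (b - a) * (c * d) + ∫ t in a..b, (f t - c) * (g t - d) := by
  have hexp : ∀ t, (f t - c) * (g t - d) = f t * g t - (c * g t + d * f t) + c * d := by
    intro t; ring
  simp_rw [hexp]
  rw [intervalIntegral.integral_add, intervalIntegral.integral_sub, intervalIntegral.integral_add,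
    intervalIntegral.integral_const_mul, intervalIntegral.integral_const_mul, hfc, hgd,
    intervalIntegral.integral_const, smul_eq_mul]
  · ring
  all_goals exact Continuous.intervalIntegrable (by fun_prop) _ _

section VerticalMean

theorem continuous_pd {g : (Fin 3 → ℝ) → ℝ} (hg : ContDiff ℝ 1 g) (j : Fin 3) :
    Continuous (pd j g) :=
  (hg.continuous_fderiv one_ne_zero).clm_apply continuous_const

theorem pd_sub {f g : (Fin 3 → ℝ) → ℝ} {x : Fin 3 → ℝ} (hf : DifferentiableAt ℝ f x)
    (hg : DifferentiableAt ℝ g x) (j : Fin 3) : pd j (f - g) x = pd j f x - pd j g x := by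
  simp [pd, fderiv_sub hf hg]

def vmean (h : ℝ) (g : (Fin 3 → ℝ) → ℝ) (x : Fin 3 → ℝ) : ℝ :=
  (1 / h) * ∫ ζ in (-h)..(0:ℝ), g (update x 2 ζ)

variable {h : ℝ} {f g : (Fin 3 → ℝ) → ℝ}

theorem vmean_update (g : (Fin 3 → ℝ) → ℝ) (x : Fin 3 → ℝ) (t : ℝ) :
    vmean h g (update x 2 t) = vmean h g x := by
  simp [vmean]

theorem intervalIntegral_eq_mul_vmean (hh : h ≠ 0) (g : (Fin 3 → ℝ) → ℝ) (x : Fin 3 → ℝ) :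
    ∫ ζ in (-h)..(0:ℝ), g (update x 2 ζ) = (0 - -h) * vmean h g x := by
  rw [vmean]; field_simp; ring

theorem continuous_vmean (hg : Continuous g) : Continuous (vmean h g) :=
  continuous_const.mul (intervalIntegral.continuous_parametric_intervalIntegral_of_continuous'
    (f := fun x ζ => g (update x 2 ζ)) (hg.comp (continuous_update 2)) _ _)

theorem differentiable_vmean (hg : ContDiff ℝ 1 g) : Differentiable ℝ (vmean h g) := fun x =>
  (hasFDerivAt_intervalIntegral_comp_update hg 2 (-h) 0 x).differentiableAt.const_mul _

theorem pd_vmean (hg : ContDiff ℝ 1 g) {j : Fin 3} (hj : j ≠ 2) :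
    pd j (vmean h g) = vmean h (pd j g) := by
  ext x
  have hd := (hasFDerivAt_intervalIntegral_comp_update hg 2 (-h) 0 x).differentiableAt
  have hmean : vmean h g = fun y => (1 / h) * ∫ ζ in (-h)..(0:ℝ), g (update y 2 ζ) := rfl
  rw [pd, hmean, fderiv_const_mul hd]
  simp [fderiv_intervalIntegral_comp_update_single hg hj, pd, vmean]

theorem vmean_add (hf : Continuous f) (hg : Continuous g) :
    vmean h (f + g) = vmean h f + vmean h g := by
  ext x
  simp only [vmean, Pi.add_apply]
  rw [intervalIntegral.integral_add ((hf.comp_update x 2).intervalIntegrable _ _)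
    ((hg.comp_update x 2).intervalIntegrable _ _), mul_add]

theorem vmean_mul (hh : h ≠ 0) (hf : Continuous f) (hg : Continuous g) :
    vmean h (f * g) = vmean h f * vmean h g + vmean h ((f - vmean h f) * (g - vmean h g)) := by
  ext x
  have key := intervalIntegral_mul_eq_add_integral_sub_mul_sub (hf.comp_update x 2)
    (hg.comp_update x 2)
    (intervalIntegral_eq_mul_vmean hh f x) (intervalIntegral_eq_mul_vmean hh g x)
  have hfluct : vmean h ((f - vmean h f) * (g - vmean h g)) x = (1 / h) *
      ∫ t in (-h)..(0:ℝ), (f (update x 2 t) - vmean h f x) * (g (update x 2 t) - vmean h g x) := by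
    conv_lhs => rw [vmean]
    simp only [Pi.mul_apply, Pi.sub_apply, vmean_update]
  rw [Pi.add_apply, Pi.mul_apply, hfluct]
  conv_lhs => rw [vmean]
  simp only [Pi.mul_apply]
  rw [key]
  field_simp
  ring

end VerticalMean

section PrimitiveEquations

variable {h : ℝ} {v : Fin 2 → (Fin 3 → ℝ) → ℝ}

theorem advH_eq (u : Fin 2 → (Fin 3 → ℝ) → ℝ) (g : (Fin 3 → ℝ) → ℝ) :
    advH u g = u 0 * pd 0 g + u 1 * pd 1 g := rfl

theorem divH_eq (u : Fin 2 → (Fin 3 → ℝ) → ℝ) : divH u = pd 0 (u 0) + pd 1 (u 1) := rfl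

theorem continuous_divH (hv : ∀ i, ContDiff ℝ 1 (v i)) : Continuous (divH v) :=
  (continuous_pd (hv 0) 0).add (continuous_pd (hv 1) 1)

theorem pd_sub_vmean {g : (Fin 3 → ℝ) → ℝ} (hg : ContDiff ℝ 1 g) {j : Fin 3} (hj : j ≠ 2) :
    pd j (g - vmean h g) = pd j g - vmean h (pd j g) := by
  ext x
  rw [pd_sub (hg.differentiable one_ne_zero x) (differentiable_vmean hg x), pd_vmean hg hj]
  rfl

theorem divH_sub_vmean (hv : ∀ i, ContDiff ℝ 1 (v i)) :
    divH (fun i => v i - vmean h (v i)) = divH v - vmean h (divH v) := by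
  rw [divH_eq, divH_eq, pd_sub_vmean (hv 0) (by decide), pd_sub_vmean (hv 1) (by decide),
    vmean_add (continuous_pd (hv 0) 0) (continuous_pd (hv 1) 1)]
  ring

theorem wv_update (h : ℝ) (v : Fin 2 → (Fin 3 → ℝ) → ℝ) (x : Fin 3 → ℝ) (t : ℝ) :
    wv h v (update x 2 t) = -∫ ζ in (-h)..t, divH v (update x 2 ζ) := by
  simp only [wv, update_idem, update_self]

theorem hasDerivAt_wv_update (hv : ∀ i, ContDiff ℝ 1 (v i)) (x : Fin 3 → ℝ) (t : ℝ) :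
    HasDerivAt (fun s => wv h v (update x 2 s)) (-divH v (update x 2 t)) t := by
  simp only [wv_update]
  exact (((continuous_divH hv).comp_update x 2).integral_hasStrictDerivAt (-h) t).hasDerivAt.neg

theorem intervalIntegral_wv_mul_pd_two (hv : ∀ i, ContDiff ℝ 1 (v i)) {g : (Fin 3 → ℝ) → ℝ}
    (hg : ContDiff ℝ 1 g) {x : Fin 3 → ℝ}
    (hdiv : ∫ ζ in (-h)..(0:ℝ), divH v (update x 2 ζ) = 0) :
    ∫ ζ in (-h)..(0:ℝ), wv h v (update x 2 ζ) * pd 2 g (update x 2 ζ)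
      = ∫ ζ in (-h)..(0:ℝ), divH v (update x 2 ζ) * g (update x 2 ζ) := by
  rw [intervalIntegral.integral_mul_deriv_eq_deriv_mul (v' := fun t => pd 2 g (update x 2 t))
    (fun t _ => hasDerivAt_wv_update hv x t)
    (fun t _ => hasDerivAt_comp_update (hg.differentiable one_ne_zero) 2 x t)
    (((continuous_divH hv).comp_update x 2).neg.intervalIntegrable _ _)
    (((continuous_pd hg 2).comp_update x 2).intervalIntegrable _ _)]
  simp [wv_update, hdiv, intervalIntegral.integral_neg]

theorem vmean_add_wv_mul_pd_two (hv : ∀ i, ContDiff ℝ 1 (v i)) {g : (Fin 3 → ℝ) → ℝ}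
    (hg : ContDiff ℝ 1 g) {x : Fin 3 → ℝ}
    (hdiv : ∫ ζ in (-h)..(0:ℝ), divH v (update x 2 ζ) = 0) {F : (Fin 3 → ℝ) → ℝ}
    (hF : Continuous F) :
    vmean h (F + wv h v * pd 2 g) x = vmean h (F + divH v * g) x := by
  have hW : Continuous fun s => wv h v (update x 2 s) :=
    continuous_iff_continuousAt.2 fun t => (hasDerivAt_wv_update hv x t).continuousAt
  have hWP : Continuous fun s => wv h v (update x 2 s) * pd 2 g (update x 2 s) :=
    hW.mul ((continuous_pd hg 2).comp_update x 2)
  have hDG : Continuous fun s => divH v (update x 2 s) * g (update x 2 s) :=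
    ((continuous_divH hv).mul hg.continuous).comp_update x 2
  simp only [vmean, Pi.add_apply, Pi.mul_apply]
  rw [intervalIntegral.integral_add ((hF.comp_update x 2).intervalIntegrable _ _)
      (hWP.intervalIntegrable _ _),
    intervalIntegral.integral_add ((hF.comp_update x 2).intervalIntegrable _ _)
      (hDG.intervalIntegrable _ _),
    intervalIntegral_wv_mul_pd_two hv hg hdiv]

theorem vmean_advH_add_divH_mul (hh : h ≠ 0) (hv : ∀ i, ContDiff ℝ 1 (v i)) (k : Fin 2)
    {x : Fin 3 → ℝ} (hdiv : vmean h (divH v) x = 0) :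
    vmean h (advH v (v k) + divH v * v k) x
      = advH (fun i => vmean h (v i)) (vmean h (v k)) x
        + vmean h (advH (fun i => v i - vmean h (v i)) (v k - vmean h (v k))
            + divH (fun i => v i - vmean h (v i)) * (v k - vmean h (v k))) x := by
  have hc (i : Fin 2) : Continuous (v i) := (hv i).continuous
  have hp (j : Fin 3) : Continuous (pd j (v k)) := continuous_pd (hv k) j
  have hd : Continuous (divH v) := continuous_divH hv
  have hfl {f : (Fin 3 → ℝ) → ℝ} (hf : Continuous f) : Continuous (f - vmean h f) :=
    hf.sub (continuous_vmean hf)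
  have h0 : (0 : Fin 3) ≠ 2 := by decide
  have h1 : (1 : Fin 3) ≠ 2 := by decide
  simp only [advH_eq, divH_sub_vmean hv, pd_sub_vmean (hv k) h0, pd_sub_vmean (hv k) h1,
    pd_vmean (hv k) h0, pd_vmean (hv k) h1]
  rw [vmean_add (((hc 0).mul (hp 0)).add ((hc 1).mul (hp 1))) (hd.mul (hc k)),
    vmean_add ((hc 0).mul (hp 0)) ((hc 1).mul (hp 1)),
    vmean_mul hh (hc 0) (hp 0), vmean_mul hh (hc 1) (hp 1), vmean_mul hh hd (hc k),
    vmean_add (((hfl (hc 0)).mul (hfl (hp 0))).add ((hfl (hc 1)).mul (hfl (hp 1))))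
      ((hfl hd).mul (hfl (hc k))),
    vmean_add ((hfl (hc 0)).mul (hfl (hp 0))) ((hfl (hc 1)).mul (hfl (hp 1)))]
  simp only [Pi.add_apply, Pi.mul_apply, hdiv]
  ring

end PrimitiveEquations

theorem statement4_general
    (h : ℝ) (hh : 0 < h)
    (v : Fin 2 → (Fin 3 → ℝ) → ℝ)
    (hv_smooth : ∀ i, ContDiff ℝ (⊤ : ℕ∞) (v i))
    (hdiv : ∀ x : Fin 3 → ℝ, (∫ ζ in (-h)..(0:ℝ), divH v (Function.update x 2 ζ)) = 0)
    (vbar : Fin 2 → (Fin 3 → ℝ) → ℝ)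
    (hvbar : ∀ i x, vbar i x = (1 / h) * ∫ ζ in (-h)..(0:ℝ), v i (Function.update x 2 ζ))
    (vtil : Fin 2 → (Fin 3 → ℝ) → ℝ)
    (hvtil : ∀ i x, vtil i x = v i x - vbar i x)
    (k : Fin 2) (x : Fin 3 → ℝ) :
    (1 / h) * (∫ ζ in (-h)..(0:ℝ),
        (advH v (v k) (Function.update x 2 ζ)
          + wv h v (Function.update x 2 ζ) * pd 2 (v k) (Function.update x 2 ζ)))
      = advH vbar (vbar k) x
        + (1 / h) * (∫ ζ in (-h)..(0:ℝ),
            (advH vtil (vtil k) (Function.update x 2 ζ)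
              + divH vtil (Function.update x 2 ζ) * vtil k (Function.update x 2 ζ))) := by
  have hv (i : Fin 2) : ContDiff ℝ 1 (v i) := (hv_smooth i).of_le (by exact_mod_cast le_top)
  obtain rfl : vbar = fun i => vmean h (v i) := funext fun i => funext (hvbar i)
  obtain rfl : vtil = fun i => v i - vmean h (v i) := funext fun i => funext (hvtil i)
  have hdiv_mean : vmean h (divH v) x = 0 := by simp [vmean, hdiv x]
  calc _ = vmean h (advH v (v k) + wv h v * pd 2 (v k)) x := rfl
    _ = vmean h (advH v (v k) + divH v * v k) x :=
      vmean_add_wv_mul_pd_two hv (hv k) (hdiv x)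
        (((hv 0).continuous.mul (continuous_pd (hv k) 0)).add
          ((hv 1).continuous.mul (continuous_pd (hv k) 1)))
    _ = _ := vmean_advH_add_divH_mul hh.ne' hv k hdiv_mean

/-- splitting of the averaged convection term into the barotropic and
baroclinic contributions. -/
theorem statement4
    (h : ℝ) (hh : 0 < h)
    (v : Fin 2 → (Fin 3 → ℝ) → ℝ)
    (hv_smooth : ∀ i, ContDiff ℝ (⊤ : ℕ∞) (v i))
    (hv_per : ∀ i, HorizPeriodic (v i))
    (hdiv : ∀ x : Fin 3 → ℝ, (∫ ζ in (-h)..(0:ℝ), divH v (Function.update x 2 ζ)) = 0)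
    (vbar : Fin 2 → (Fin 3 → ℝ) → ℝ)
    (hvbar : ∀ i x, vbar i x = (1 / h) * ∫ ζ in (-h)..(0:ℝ), v i (Function.update x 2 ζ))
    (vtil : Fin 2 → (Fin 3 → ℝ) → ℝ)
    (hvtil : ∀ i x, vtil i x = v i x - vbar i x)
    (k : Fin 2) (x : Fin 3 → ℝ) :
    (1 / h) * (∫ ζ in (-h)..(0:ℝ),
        (advH v (v k) (Function.update x 2 ζ)
          + wv h v (Function.update x 2 ζ) * pd 2 (v k) (Function.update x 2 ζ)))
      = advH vbar (vbar k) x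
        + (1 / h) * (∫ ζ in (-h)..(0:ℝ),
            (advH vtil (vtil k) (Function.update x 2 ζ)
              + divH vtil (Function.update x 2 ζ) * vtil k (Function.update x 2 ζ))) :=
  statement4_general h hh v hv_smooth hdiv vbar hvbar vtil hvtil k x
end
end

section
/- Let ṽ : ℝ³ → ℝ² and θ : ℝ³ → ℝ be smooth and 1-periodic in the horizontal variables, let α ∈ ℝ, and suppose θ satisfies the boundary conditions ∂₃θ(x_H,−h) = 0 and ∂₃θ(x_H,0) + α θ(x_H,0) = 0 for every x_H. Then ∫_𝒪 ‖ṽ‖² θ Δθ dx = − α ∫_{𝕋²} ‖ṽ(x_H,0)‖² |θ(x_H,0)|² dx_H − ∫_𝒪 ‖ṽ‖² |∇θ|² dx − 2 ∑_{i=1}^{2} ∑_{j=1}^{3} ∫_𝒪 θ · ṽⁱ · (∂ⱼṽⁱ) · (∂ⱼθ) dx, where Δ = ∂₁² + ∂₂² + ∂₃², ‖·‖ is the Euclidean norm on ℝ², and |∇θ|² = ∑_{j=1}^{3} |∂ⱼθ|². -/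
open MeasureTheory Real

noncomputable section

/-!
Apply the divergence theorem on the box to the flux `‖ṽ‖² θ ∇θ`, whose divergence is
`‖ṽ‖² θ Δθ + ‖ṽ‖² |∇θ|² + 2 ∑ᵢⱼ θ ṽⁱ ∂ⱼṽⁱ ∂ⱼθ`. The lateral faces cancel by horizontal
periodicity, the flux through the bottom vanishes by the Neumann condition, and by the Robin
condition the flux through the top is `-α ‖ṽ‖² θ²`.
-/

section Calculus

variable {f g : (Fin 3 → ℝ) → ℝ} {x : Fin 3 → ℝ}

lemma ContDiff.pd {m n : WithTop ℕ∞} (hf : ContDiff ℝ n f) (hmn : m + 1 ≤ n) (j : Fin 3) :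
    ContDiff ℝ m (pd j f) :=
  (hf.fderiv_right hmn).clm_apply contDiff_const

lemma pd_mul (j : Fin 3) (hf : DifferentiableAt ℝ f x) (hg : DifferentiableAt ℝ g x) :
    pd j (fun y => f y * g y) x = pd j f x * g x + f x * pd j g x := by
  simp only [pd, fderiv_fun_mul hf hg, add_apply, smul_apply, smul_eq_mul]
  ring

lemma pd_sq (j : Fin 3) (hf : DifferentiableAt ℝ f x) :
    pd j (fun y => f y ^ 2) x = 2 * f x * pd j f x := by
  simp only [sq, pd_mul j hf hf]
  ring

lemma pd_sum {ι : Type*} (s : Finset ι) (j : Fin 3) {F : ι → (Fin 3 → ℝ) → ℝ}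
    (hF : ∀ i ∈ s, DifferentiableAt ℝ (F i) x) :
    pd j (fun y => ∑ i ∈ s, F i y) x = ∑ i ∈ s, pd j (F i) x := by
  simp only [pd, fderiv_fun_sum hF, FunLike.coe_sum, Finset.sum_apply]

end Calculus

section Periodicity

lemma pd_add_eq_of_add_eq {f : (Fin 3 → ℝ) → ℝ} {c : Fin 3 → ℝ} (hf : ∀ x, f (x + c) = f x)
    (j : Fin 3) (x : Fin 3 → ℝ) : pd j f (x + c) = pd j f x := by
  simp only [pd, ← fderiv_comp_add_right, hf]

lemma HorizPeriodic.pd {f : (Fin 3 → ℝ) → ℝ} (hf : HorizPeriodic f) (j : Fin 3) :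
    HorizPeriodic (pd j f) := fun x =>
  ⟨pd_add_eq_of_add_eq (fun y => (hf y).1) j x, pd_add_eq_of_add_eq (fun y => (hf y).2) j x⟩

end Periodicity

lemma Fin.insertNth_add_single {n : ℕ} (i : Fin (n + 1)) (c d : ℝ) (y : Fin n → ℝ) :
    (Fin.insertNth i c y : Fin (n + 1) → ℝ) + Pi.single i d = Fin.insertNth i (c + d) y := by
  ext j
  rcases eq_or_ne j i with rfl | hj
  · simp
  · obtain ⟨k, rfl⟩ := Fin.exists_succAbove_eq hj
    simp

lemma setIntegral_insertNth_add_one {n : ℕ} {f : (Fin (n + 1) → ℝ) → ℝ} (i : Fin (n + 1))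
    (hf : ∀ x, f (x + Pi.single i 1) = f x) (s : Set (Fin n → ℝ)) (c : ℝ) :
    ∫ y in s, f (Fin.insertNth i (c + 1) y) = ∫ y in s, f (Fin.insertNth i c y) := by
  simp only [← Fin.insertNth_add_single, hf]

lemma insertNth_two_eq (c : ℝ) (y : Fin 2 → ℝ) :
    (Fin.insertNth 2 c y : Fin 3 → ℝ) = ![y 0, y 1, c] := by
  ext j; fin_cases j <;> rfl

theorem integral_box_sum_pd_eq {h : ℝ} (hh : 0 ≤ h) {G : Fin 3 → (Fin 3 → ℝ) → ℝ}
    (hG : ∀ j, ContDiff ℝ 1 (G j))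
    (hG₀ : ∀ x, G 0 (x + Pi.single 0 1) = G 0 x) (hG₁ : ∀ x, G 1 (x + Pi.single 1 1) = G 1 x) :
    ∫ x in Box h, ∑ j, pd j (G j) x =
      (∫ y in Set.Icc (![0, 0] : Fin 2 → ℝ) ![1, 1], G 2 ![y 0, y 1, 0])
        - ∫ y in Set.Icc (![0, 0] : Fin 2 → ℝ) ![1, 1], G 2 ![y 0, y 1, -h] := by
  have hle : (![0, 0, -h] : Fin 3 → ℝ) ≤ ![1, 1, 0] := by
    intro i; fin_cases i <;> simp [hh]
  have hdiv : Continuous fun x => ∑ j, pd j (G j) x :=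
    continuous_finsetSum _ fun j _ => ((hG j).pd (m := 0) (by simp) j).continuous
  have hface : (![0, 0, -h] : Fin 3 → ℝ) ∘ Fin.succAbove 2 = ![0, 0] ∧
      (![1, 1, 0] : Fin 3 → ℝ) ∘ Fin.succAbove 2 = ![1, 1] := by
    constructor <;> (ext k; fin_cases k <;> rfl)
  have gauss := integral_divergence_of_hasFDerivAt_off_countable' _ _ hle G
    (fun j x => fderiv ℝ (G j) x) ∅ Set.countable_empty (fun j => (hG j).continuous.continuousOn)
    (fun x _ j => ((hG j).differentiable one_ne_zero x).hasFDerivAt) hdiv.integrableOn_Icc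
  have lateral₀ := setIntegral_insertNth_add_one 0 hG₀
    (Set.Icc (![0, 0, -h] ∘ Fin.succAbove 0) (![1, 1, 0] ∘ Fin.succAbove 0)) 0
  have lateral₁ := setIntegral_insertNth_add_one 1 hG₁
    (Set.Icc (![0, 0, -h] ∘ Fin.succAbove 1) (![1, 1, 0] ∘ Fin.succAbove 1)) 0
  rw [zero_add] at lateral₀ lateral₁
  refine gauss.trans ?_
  rw [Fin.sum_univ_three]
  simp only [Matrix.cons_val_zero, Matrix.cons_val_one, Matrix.cons_val_two,
    Matrix.head_cons, Matrix.tail_cons, lateral₀, lateral₁, hface, insertNth_two_eq, sub_self,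
    zero_add]

def energyFlux (v : Fin 2 → (Fin 3 → ℝ) → ℝ) (θ : (Fin 3 → ℝ) → ℝ) (j : Fin 3)
    (x : Fin 3 → ℝ) : ℝ :=
  (∑ i, v i x ^ 2) * θ x * pd j θ x

section EnergyFlux

variable {v : Fin 2 → (Fin 3 → ℝ) → ℝ} {θ : (Fin 3 → ℝ) → ℝ}

lemma pd_energyFlux {x : Fin 3 → ℝ} (hv : ∀ i, DifferentiableAt ℝ (v i) x)
    (hθ : DifferentiableAt ℝ θ x) (j : Fin 3) (hθj : DifferentiableAt ℝ (pd j θ) x) :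
    pd j (energyFlux v θ j) x = (∑ i, v i x ^ 2) * θ x * pd j (pd j θ) x
      + (∑ i, v i x ^ 2) * pd j θ x ^ 2 + 2 * ∑ i, θ x * v i x * pd j (v i) x * pd j θ x := by
  have hF : DifferentiableAt ℝ (fun y => ∑ i, v i y ^ 2) x :=
    DifferentiableAt.fun_sum fun i _ => (hv i).pow 2
  unfold energyFlux
  rw [pd_mul j (hF.fun_mul hθ) hθj, pd_mul j hF hθ,
    pd_sum _ j (F := fun i y => v i y ^ 2) fun i _ => (hv i).pow 2,
    Finset.sum_congr rfl fun i _ => pd_sq j (hv i)]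
  simp only [Fin.sum_univ_two]
  ring

lemma sum_pd_energyFlux {x : Fin 3 → ℝ} (hv : ∀ i, DifferentiableAt ℝ (v i) x)
    (hθ : DifferentiableAt ℝ θ x) (hθ' : ∀ j, DifferentiableAt ℝ (pd j θ) x) :
    ∑ j, pd j (energyFlux v θ j) x = (∑ i, v i x ^ 2) * θ x * (∑ j, pd j (pd j θ) x)
      + (∑ i, v i x ^ 2) * (∑ j, pd j θ x ^ 2)
      + 2 * ∑ i, ∑ j, θ x * v i x * pd j (v i) x * pd j θ x := by
  simp only [pd_energyFlux hv hθ _ (hθ' _), Fin.sum_univ_three, Fin.sum_univ_two]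
  ring

lemma ContDiff.energyFlux (hv : ∀ i, ContDiff ℝ 1 (v i)) (hθ : ContDiff ℝ 2 θ) (j : Fin 3) :
    ContDiff ℝ 1 (energyFlux v θ j) :=
  ((ContDiff.sum fun i _ => (hv i).pow 2).mul (hθ.of_le one_le_two)).mul (hθ.pd (by norm_num) j)

lemma HorizPeriodic.energyFlux (hv : ∀ i, HorizPeriodic (v i)) (hθ : HorizPeriodic θ)
    (j : Fin 3) : HorizPeriodic (energyFlux v θ j) := fun x => by
  simp only [_root_.energyFlux, fun i => (hv i x).1, fun i => (hv i x).2, (hθ x).1, (hθ x).2,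
    (hθ.pd j x).1, (hθ.pd j x).2, and_self]

lemma integral_sum_pd_energyFlux {s : Set (Fin 3 → ℝ)} (hs : IsCompact s)
    (hv : ∀ i, ContDiff ℝ 1 (v i)) (hθ : ContDiff ℝ 2 θ) :
    ∫ x in s, ∑ j, pd j (energyFlux v θ j) x =
      (∫ x in s, (∑ i, v i x ^ 2) * θ x * (∑ j, pd j (pd j θ) x))
        + (∫ x in s, (∑ i, v i x ^ 2) * (∑ j, pd j θ x ^ 2))
        + 2 * ∑ i, ∑ j, ∫ x in s, θ x * v i x * pd j (v i) x * pd j θ x := by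
  have hθ₁ : ∀ j, ContDiff ℝ 1 (pd j θ) := hθ.pd (by norm_num)
  have hvc : ∀ i, Continuous (v i) := fun i => (hv i).continuous
  have hθc : Continuous θ := hθ.continuous
  have hθ₁c : ∀ j, Continuous (pd j θ) := fun j => (hθ₁ j).continuous
  have hθ₂c : ∀ j, Continuous (pd j (pd j θ)) := fun j =>
    ((hθ₁ j).pd (m := 0) (by simp) j).continuous
  have hv₁c : ∀ i j, Continuous (pd j (v i)) := fun i j =>
    ((hv i).pd (m := 0) (by simp) j).continuous
  have int : ∀ {f : (Fin 3 → ℝ) → ℝ}, Continuous f → IntegrableOn f s :=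
    fun hf => hf.continuousOn.integrableOn_compact hs
  simp_rw [sum_pd_energyFlux (fun i => (hv i).differentiable one_ne_zero _)
    (hθ.differentiable two_ne_zero _) (fun j => (hθ₁ j).differentiable one_ne_zero _)]
  rw [integral_add (by apply int; fun_prop) (by apply int; fun_prop),
    integral_add (by apply int; fun_prop) (by apply int; fun_prop), integral_const_mul,
    integral_finsetSum _ fun i _ => by apply int; fun_prop]
  congr 2
  exact Finset.sum_congr rfl fun i _ => integral_finsetSum _ fun j _ => by apply int; fun_prop

end EnergyFlux

/-- integration by parts for `∫ ‖ṽ‖² θ Δθ` under the Robin boundary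
condition at the top and the Neumann condition at the bottom. -/
theorem statement6
    (h : ℝ) (hh : 0 < h)
    (vt : Fin 2 → (Fin 3 → ℝ) → ℝ)
    (hvt_smooth : ∀ i, ContDiff ℝ (⊤ : ℕ∞) (vt i))
    (hvt_per : ∀ i, HorizPeriodic (vt i))
    (θ : (Fin 3 → ℝ) → ℝ)
    (hθ_smooth : ContDiff ℝ (⊤ : ℕ∞) θ) (hθ_per : HorizPeriodic θ)
    (α : ℝ)
    (hbc_bot : ∀ a b : ℝ, pd 2 θ ![a, b, -h] = 0)
    (hbc_top : ∀ a b : ℝ, pd 2 θ ![a, b, 0] + α * θ ![a, b, 0] = 0) :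
    (∫ x in Box h, (∑ i, vt i x ^ 2) * θ x * (∑ j, pd j (pd j θ) x))
      = -α * (∫ y in Set.Icc (![0, 0] : Fin 2 → ℝ) ![1, 1],
              (∑ i, vt i ![y 0, y 1, 0] ^ 2) * (θ ![y 0, y 1, 0]) ^ 2)
        - (∫ x in Box h, (∑ i, vt i x ^ 2) * (∑ j, (pd j θ x) ^ 2))
        - 2 * ∑ i : Fin 2, ∑ j : Fin 3,
            ∫ x in Box h, θ x * vt i x * pd j (vt i) x * pd j θ x := by
  have hv : ∀ i, ContDiff ℝ 1 (vt i) := fun i => (hvt_smooth i).of_le (by norm_cast)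
  have hθ : ContDiff ℝ 2 θ := hθ_smooth.of_le (by norm_cast)
  have gauss := integral_box_sum_pd_eq hh.le (ContDiff.energyFlux hv hθ)
    (fun x => (HorizPeriodic.energyFlux hvt_per hθ_per 0 x).1)
    (fun x => (HorizPeriodic.energyFlux hvt_per hθ_per 1 x).2)
  have top : ∀ a b : ℝ, energyFlux vt θ 2 ![a, b, 0]
      = -α * ((∑ i, vt i ![a, b, 0] ^ 2) * θ ![a, b, 0] ^ 2) := fun a b => by
    rw [energyFlux, eq_neg_of_add_eq_zero_left (hbc_top a b)]
    ring
  have bottom : ∀ a b : ℝ, energyFlux vt θ 2 ![a, b, -h] = 0 := fun a b => by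
    rw [energyFlux, hbc_bot, mul_zero]
  rw [integral_sum_pd_energyFlux (s := Box h) isCompact_Icc hv hθ] at gauss
  simp only [top, bottom, integral_const_mul, integral_zero, sub_zero] at gauss
  linarith
end
end
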